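/- arXiv:2605.13917 — 2 statements merged into one kernel-verified Lean document; each statement's English description precedes it below -/
import Mathlib

section
/- Let G = (V, E⁺, E⁰) be a fuzzy graph with weight function ω and let k ≥ 1 and d ≥ 1 be integers. Assume: (i) for every pair of distinct vertices u, v with {u,v} ∉ E⁺ one has |N⁺(u) ∩ N⁺(v)| ≤ k; (ii) every critical clique of G⁽⁺⁾ has at most k + 2 vertices; (iii) there is an ordering (v₁, …, v_n) of V such that each vᵢ has at most d fuzzy neighbors among v_{i+1}, …, v_n. Then every cluster of every clustering of G of cost at most k contains at most 15k²d vertices. -/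
open Finset

/-- A fuzzy graph: a finite vertex set with disjoint symmetric irreflexive sets of
'real' edges and 'fuzzy' edges; remaining pairs of distinct vertices are 'nonedges'. -/
structure FuzzyGraph (V : Type*) where
  real : V → V → Bool
  fuzzy : V → V → Bool
  real_symm : ∀ u v, real u v = real v u
  fuzzy_symm : ∀ u v, fuzzy u v = fuzzy v u
  real_irrefl : ∀ v, real v v = false
  fuzzy_irrefl : ∀ v, fuzzy v v = false
  not_real_and_fuzzy : ∀ u v, ¬(real u v = true ∧ fuzzy u v = true)

namespace FuzzyGraph

variable {V : Type*}

/-- The pair `{u,v}` is a nonedge: distinct, neither a real nor a fuzzy edge. -/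
def nonedge (G : FuzzyGraph V) (u v : V) : Prop :=
  u ≠ v ∧ ¬G.real u v ∧ ¬G.fuzzy u v

instance (G : FuzzyGraph V) [DecidableEq V] (u v : V) : Decidable (G.nonedge u v) :=
  inferInstanceAs (Decidable (u ≠ v ∧ ¬G.real u v ∧ ¬G.fuzzy u v))

/-- The simple graph `G⁽⁺⁾` of real edges. -/
def plus (G : FuzzyGraph V) : SimpleGraph V where
  Adj u v := G.real u v
  symm := ⟨fun u v (h : G.real u v = true) => by rwa [G.real_symm] at h⟩
  loopless := ⟨fun v (h : G.real v v = true) => by rw [G.real_irrefl] at h; exact Bool.noConfusion h⟩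

/-- The simple graph `G⁽⁰⁾` of fuzzy edges. -/
def zero (G : FuzzyGraph V) : SimpleGraph V where
  Adj u v := G.fuzzy u v
  symm := ⟨fun u v (h : G.fuzzy u v = true) => by rwa [G.fuzzy_symm] at h⟩
  loopless := ⟨fun v (h : G.fuzzy v v = true) => by rw [G.fuzzy_irrefl] at h; exact Bool.noConfusion h⟩

variable [Fintype V] [DecidableEq V]

/-- The real neighborhood `N⁺(v)`. -/
def realNbrs (G : FuzzyGraph V) (v : V) : Finset V := univ.filter fun u => G.real v u

/-- The fuzzy neighborhood `N⁰(v)`. -/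
def fuzzyNbrs (G : FuzzyGraph V) (v : V) : Finset V := univ.filter fun u => G.fuzzy v u

/-- The nonneighborhood `N⁻(v)`. -/
def nonNbrs (G : FuzzyGraph V) (v : V) : Finset V := univ.filter fun u => G.nonedge v u

/-- The closed real neighborhood `N⁺[v]`. -/
def closedRealNbrs (G : FuzzyGraph V) (v : V) : Finset V := insert v (G.realNbrs v)

end FuzzyGraph

/-- `ω` is a valid weight function for `G`: symmetric nonnegative integer weights,
zero exactly on the fuzzy edges. -/
def IsWeight {V : Type*} [Fintype V] [DecidableEq V] (G : FuzzyGraph V) (ω : V → V → ℕ) : Prop :=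
  (∀ u v, ω u v = ω v u) ∧ ∀ u v : V, u ≠ v → (ω u v = 0 ↔ G.fuzzy u v)

/-- The unit weight function: weight 1 on real edges and nonedges, 0 on fuzzy edges. -/
def unitW {V : Type*} (G : FuzzyGraph V) : V → V → ℕ := fun u v => if G.fuzzy u v then 0 else 1

/-- Two vertices lie in a common cluster of the clustering `𝒞`. -/
def together {V : Type*} [Fintype V] [DecidableEq V] (𝒞 : Finpartition (univ : Finset V))
    (u v : V) : Prop :=
  ∃ C ∈ 𝒞.parts, u ∈ C ∧ v ∈ C

instance {V : Type*} [Fintype V] [DecidableEq V] (𝒞 : Finpartition (univ : Finset V)) (u v : V) :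
    Decidable (together 𝒞 u v) :=
  inferInstanceAs (Decidable (∃ C ∈ 𝒞.parts, u ∈ C ∧ v ∈ C))

/-- The cost of a clustering: total weight of real edges between different clusters
plus total weight of nonedges inside clusters.  (Each unordered pair is counted twice
in the sum over ordered pairs, whence the division by 2.) -/
def cost {V : Type*} [Fintype V] [DecidableEq V] (G : FuzzyGraph V) (ω : V → V → ℕ)
    (𝒞 : Finpartition (univ : Finset V)) : ℕ :=
  (∑ p ∈ univ.offDiag,
      ((if G.real p.1 p.2 ∧ ¬together 𝒞 p.1 p.2 then ω p.1 p.2 else 0) +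
       (if G.nonedge p.1 p.2 ∧ together 𝒞 p.1 p.2 then ω p.1 p.2 else 0))) / 2

/-- A clique in `G⁽⁺⁾`: pairwise real-adjacent vertices. -/
def IsRealClique {V : Type*} (G : FuzzyGraph V) (K : Finset V) : Prop :=
  ∀ u ∈ K, ∀ v ∈ K, u ≠ v → G.real u v

/-- A clique in `G⁽⁰⁾`: pairwise fuzzy-adjacent vertices. -/
def IsFuzzyClique {V : Type*} (G : FuzzyGraph V) (K : Finset V) : Prop :=
  ∀ u ∈ K, ∀ v ∈ K, u ≠ v → G.fuzzy u v

/-- A critical clique of `G⁽⁺⁾`: a clique with `⋂_{x ∈ K} N⁺[x] = ⋃_{x ∈ K} N⁺[x]`,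
inclusion-wise maximal with this property. -/
def IsCriticalClique {V : Type*} [Fintype V] [DecidableEq V] (G : FuzzyGraph V)
    (K : Finset V) : Prop :=
  IsRealClique G K ∧ K.inf (G.closedRealNbrs) = K.sup (G.closedRealNbrs) ∧
    ∀ K' : Finset V, K ⊆ K' → IsRealClique G K' →
      K'.inf (G.closedRealNbrs) = K'.sup (G.closedRealNbrs) → K' = K

/-- A simple graph is `c`-closed if every pair of distinct nonadjacent vertices has
fewer than `c` common neighbors. -/
def IsCClosed {V : Type*} (H : SimpleGraph V) (c : ℕ) : Prop :=
  ∀ u v : V, u ≠ v → ¬H.Adj u v → Set.ncard {w | H.Adj u w ∧ H.Adj v w} < c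

/-- A fuzzy graph is fuzzy `c`-closed if its fuzzy edge graph `G⁽⁰⁾` is `c`-closed. -/
def FuzzyCClosed {V : Type*} [Fintype V] [DecidableEq V] (G : FuzzyGraph V) (c : ℕ) : Prop :=
  ∀ u v : V, u ≠ v → ¬G.fuzzy u v → ((G.fuzzyNbrs u) ∩ (G.fuzzyNbrs v)).card < c

/-!
Fix a cluster `C` with `n` vertices. Cost at most `k` leaves room for at most `2k + 1` ordered
nonedge pairs inside `C` and at most `k` vertices of `C` with a real edge leaving `C`, and the
degeneracy ordering allows at most `2dn` ordered fuzzy pairs inside `C`. So the vertices of `C`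
have at most `2k + 1 + 2dn` non-real partners in `C` altogether.

By (i), two vertices with fewer than about `(n - k) / 2` non-real partners each are
real-adjacent, so the remaining (heavy) vertices `H` cover all non-real pairs, and double
counting gives `|H| ≤ 6d`. Double counting again, at most `4d` vertices of `H` (the exposed
ones, `E`) have a non-real partner outside `H`, and by (i) each has at most `k` real neighbors
outside `H`. Every other vertex of `C` outside `H` and off the boundary has closed real
neighborhood exactly `C \ E`, so these vertices lie in one critical clique, of size at most
`k + 2` by (ii). Hence `n ≤ 6d + k + 4dk + k + 2 ≤ 15k²d`.
-/

namespace FuzzyGraph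

section Cost

variable {V : Type*} {G : FuzzyGraph V} {u v : V}

lemma ne_of_real (h : G.real u v) : u ≠ v := by
  rintro rfl
  simp [G.real_irrefl] at h

lemma not_fuzzy_of_real (h : G.real u v) : ¬G.fuzzy u v :=
  fun hf => G.not_real_and_fuzzy u v ⟨h, hf⟩

variable [Fintype V] [DecidableEq V] {ω : V → V → ℕ} {𝒞 : Finpartition (univ : Finset V)}
  {C : Finset V}

lemma _root_.IsWeight.pos (hω : IsWeight G ω) (huv : u ≠ v) (h : ¬G.fuzzy u v) : 0 < ω u v :=
  Nat.pos_of_ne_zero fun h0 => h ((hω.2 u v huv).1 h0)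

lemma together_comm : together 𝒞 u v ↔ together 𝒞 v u := by
  simp only [together, and_comm]

lemma not_together_of_mem_of_notMem (hC : C ∈ 𝒞.parts) (hu : u ∈ C) (hv : v ∉ C) :
    ¬together 𝒞 u v := by
  rintro ⟨D, hD, huD, hvD⟩
  exact hv (𝒞.eq_of_mem_parts hD hC huD hu ▸ hvD)

variable (G ω 𝒞) in
def penalty (p : V × V) : ℕ :=
  (if G.real p.1 p.2 ∧ ¬together 𝒞 p.1 p.2 then ω p.1 p.2 else 0) +
    (if G.nonedge p.1 p.2 ∧ together 𝒞 p.1 p.2 then ω p.1 p.2 else 0)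

lemma penalty_self (v : V) : penalty G ω 𝒞 (v, v) = 0 := by
  simp [penalty, nonedge, G.real_irrefl]

lemma one_le_penalty_of_real (hω : IsWeight G ω) (h : G.real u v) (hn : ¬together 𝒞 u v) :
    1 ≤ penalty G ω 𝒞 (u, v) := by
  have := hω.pos (ne_of_real h) (not_fuzzy_of_real h)
  simp only [penalty, if_pos (And.intro h hn)]
  omega

lemma one_le_penalty_of_nonedge (hω : IsWeight G ω) (h : G.nonedge u v) (ht : together 𝒞 u v) :
    1 ≤ penalty G ω 𝒞 (u, v) := by
  have := hω.pos h.1 h.2.2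
  simp only [penalty, if_pos (And.intro h ht)]
  omega

/-- `cost` halves a sum over ordered pairs, rounding down: hence the `+ 1`. -/
lemma card_le_two_mul_cost_add_one {S : Finset (V × V)} (hS : ∀ p ∈ S, 1 ≤ penalty G ω 𝒞 p) :
    S.card ≤ 2 * cost G ω 𝒞 + 1 := by
  have hoff : S ⊆ univ.offDiag := fun p hp => by
    refine mem_offDiag.2 ⟨mem_univ _, mem_univ _, fun he => ?_⟩
    have := hS p hp
    rw [← Prod.mk.eta (p := p), he, penalty_self] at this
    omega
  have hsum : S.card ≤ ∑ p ∈ univ.offDiag, penalty G ω 𝒞 p :=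
    calc S.card = ∑ _p ∈ S, 1 := card_eq_sum_ones S
      _ ≤ ∑ p ∈ S, penalty G ω 𝒞 p := sum_le_sum hS
      _ ≤ ∑ p ∈ univ.offDiag, penalty G ω 𝒞 p := sum_le_sum_of_subset hoff
  change S.card ≤ 2 * ((∑ p ∈ univ.offDiag, penalty G ω 𝒞 p) / 2) + 1
  omega

lemma card_nonedge_pairs_le (hω : IsWeight G ω) (hC : C ∈ 𝒞.parts) :
    ((C ×ˢ C).filter fun p => G.nonedge p.1 p.2).card ≤ 2 * cost G ω 𝒞 + 1 :=
  card_le_two_mul_cost_add_one fun p hp => by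
    obtain ⟨hp, hne⟩ := mem_filter.1 hp
    obtain ⟨h1, h2⟩ := mem_product.1 hp
    exact one_le_penalty_of_nonedge hω hne ⟨C, hC, h1, h2⟩

variable (G) in
def boundary (C : Finset V) : Finset V :=
  C.filter fun v => ∃ w ∉ C, G.real v w

/-- Each real edge leaving a cluster is paid for twice in the sum over ordered pairs. -/
lemma card_boundary_le_cost (hω : IsWeight G ω) (hC : C ∈ 𝒞.parts) :
    (G.boundary C).card ≤ cost G ω 𝒞 := by
  set T := (C ×ˢ Cᶜ).filter fun p => G.real p.1 p.2
  have hbT : (G.boundary C).card ≤ T.card := by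
    refine (card_le_card fun v hv => ?_).trans (card_image_le (f := Prod.fst))
    obtain ⟨hvC, w, hwC, hvw⟩ := mem_filter.1 hv
    exact mem_image.2 ⟨(v, w), mem_filter.2 ⟨mem_product.2 ⟨hvC, mem_compl.2 hwC⟩, hvw⟩, rfl⟩
  have hdisj : Disjoint T (T.image Prod.swap) := by
    refine disjoint_left.2 fun p hp hp' => ?_
    obtain ⟨q, hq, rfl⟩ := mem_image.1 hp'
    exact mem_compl.1 (mem_product.1 (mem_filter.1 hq).1).2 (mem_product.1 (mem_filter.1 hp).1).1
  have hpen : ∀ p ∈ T ∪ T.image Prod.swap, 1 ≤ penalty G ω 𝒞 p := by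
    intro p hp
    rcases mem_union.1 hp with hp | hp
    · obtain ⟨hp, hr⟩ := mem_filter.1 hp
      obtain ⟨h1, h2⟩ := mem_product.1 hp
      exact one_le_penalty_of_real hω hr (not_together_of_mem_of_notMem hC h1 (mem_compl.1 h2))
    · obtain ⟨⟨a, b⟩, hq, rfl⟩ := mem_image.1 hp
      obtain ⟨hq, hr⟩ := mem_filter.1 hq
      obtain ⟨h1, h2⟩ := mem_product.1 hq
      refine one_le_penalty_of_real hω (by rwa [G.real_symm]) fun ht => ?_
      exact not_together_of_mem_of_notMem hC h1 (mem_compl.1 h2) (together_comm.1 ht)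
  have := card_le_two_mul_cost_add_one hpen
  rw [card_union_of_disjoint hdisj, card_image_of_injective _ Prod.swap_injective] at this
  omega

end Cost

section NonReal

variable {V : Type*} [DecidableEq V] (G : FuzzyGraph V) {C H : Finset V} {k : ℕ}

def nonRealIn (C : Finset V) (v : V) : Finset V :=
  C.filter fun w => v ≠ w ∧ ¬G.real v w

lemma sum_card_nonRealIn_eq (C : Finset V) :
    ∑ v ∈ C, (G.nonRealIn C v).card =
      ((C ×ˢ C).filter fun p => p.1 ≠ p.2 ∧ ¬G.real p.1 p.2).card := by
  rw [card_filter, sum_product]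
  simp only [nonRealIn, card_filter]

lemma sum_card_nonRealIn_le (C : Finset V) :
    ∑ v ∈ C, (G.nonRealIn C v).card ≤
      ((C ×ˢ C).filter fun p => G.nonedge p.1 p.2).card +
        ((C ×ˢ C).filter fun p => G.fuzzy p.1 p.2).card := by
  rw [sum_card_nonRealIn_eq]
  refine (card_le_card fun p hp => ?_).trans (card_union_le _ _)
  obtain ⟨hpC, hne, hr⟩ := mem_filter.1 hp
  by_cases hf : G.fuzzy p.1 p.2
  · exact mem_union_right _ (mem_filter.2 ⟨hpC, hf⟩)
  · exact mem_union_left _ (mem_filter.2 ⟨hpC, hne, hr, hf⟩)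

def CoversNonReal (C H : Finset V) : Prop :=
  ∀ u ∈ C, ∀ v ∈ C, u ≠ v → ¬G.real u v → u ∈ H ∨ v ∈ H

def heavy (C : Finset V) (t : ℕ) : Finset V :=
  C.filter fun v => t ≤ (G.nonRealIn C v).card

lemma card_heavy_mul_le (C : Finset V) (t : ℕ) :
    (G.heavy C t).card * t ≤ ∑ v ∈ C, (G.nonRealIn C v).card :=
  calc (G.heavy C t).card * t ≤ ∑ v ∈ G.heavy C t, (G.nonRealIn C v).card := by
        simpa only [smul_eq_mul] using
          card_nsmul_le_sum (G.heavy C t) _ t fun v hv => (mem_filter.1 hv).2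
    _ ≤ ∑ v ∈ C, (G.nonRealIn C v).card := sum_le_sum_of_subset (filter_subset _ _)

def exposed (C H : Finset V) : Finset V :=
  H.filter fun h => ∃ w ∈ C \ H, ¬G.real h w

lemma card_le_card_add_card_nonRealIn {h : V} (hh : h ∈ H) :
    C.card ≤ H.card + ((C \ H).filter fun w => G.real h w).card + (G.nonRealIn C h).card := by
  have hcov : C ⊆ H ∪ (C \ H).filter (fun w => G.real h w) ∪ G.nonRealIn C h := by
    intro w hw
    by_cases hwH : w ∈ H
    · exact mem_union_left _ (mem_union_left _ hwH)
    by_cases hhw : G.real h w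
    · exact mem_union_left _ (mem_union_right _ (mem_filter.2 ⟨mem_sdiff.2 ⟨hw, hwH⟩, hhw⟩))
    · exact mem_union_right _ (mem_filter.2 ⟨hw, fun e => hwH (e ▸ hh), hhw⟩)
  calc C.card ≤ _ := card_le_card hcov
    _ ≤ _ := (card_union_le _ _).trans (Nat.add_le_add_right (card_union_le _ _) _)

variable [Fintype V]

/-- The ordering gives at most `d |A|` forward fuzzy pairs in `A`; the backward ones are their
mirror images. -/
lemma card_fuzzy_pairs_le {d : ℕ} (σ : Fin (Fintype.card V) ≃ V)
    (hσ : ∀ i, (univ.filter fun j => i < j ∧ G.fuzzy (σ i) (σ j)).card ≤ d) (A : Finset V) :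
    ((A ×ˢ A).filter fun p => G.fuzzy p.1 p.2).card ≤ 2 * (d * A.card) := by
  set F := (A ×ˢ A).filter fun p => G.fuzzy p.1 p.2
  set Fwd := F.filter fun p => σ.symm p.1 < σ.symm p.2
  have hsplit : F ⊆ Fwd ∪ Fwd.image Prod.swap := by
    intro p hp
    obtain ⟨hpA, hpf⟩ := mem_filter.1 hp
    have hne : σ.symm p.1 ≠ σ.symm p.2 := fun he => by
      rw [σ.symm.injective he, G.fuzzy_irrefl] at hpf
      exact Bool.false_ne_true hpf
    rcases hne.lt_or_gt with hlt | hgt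
    · exact mem_union_left _ (mem_filter.2 ⟨hp, hlt⟩)
    · refine mem_union_right _ (mem_image.2 ⟨p.swap, mem_filter.2 ⟨?_, hgt⟩, p.swap_swap⟩)
      exact mem_filter.2 ⟨mem_product.2 (mem_product.1 hpA).symm, by rwa [G.fuzzy_symm]⟩
  have hFwd : Fwd.card ≤ d * A.card := by
    refine card_le_mul_card_image_of_maps_to
      (fun p hp => (mem_product.1 (mem_filter.1 (mem_filter.1 hp).1).1).1) d fun u _ => ?_
    refine (card_le_card_of_injOn (fun p => σ.symm p.2) (fun p hp => ?_)
      fun p hp q hq he => ?_).trans (hσ (σ.symm u))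
    · simp only [mem_coe, mem_filter] at hp
      obtain ⟨⟨⟨-, hf⟩, hlt⟩, rfl⟩ := hp
      simpa [hlt] using hf
    · rw [mem_coe, mem_filter] at hp hq
      exact Prod.ext (hp.2.trans hq.2.symm) (σ.symm.injective he)
  calc F.card ≤ (Fwd ∪ Fwd.image Prod.swap).card := card_le_card hsplit
    _ ≤ Fwd.card + Fwd.card := (card_union_le _ _).trans (Nat.add_le_add_left card_image_le _)
    _ ≤ 2 * (d * A.card) := by omega

lemma card_le_card_nonRealIn_add_card_inter (C : Finset V) (u v : V) :
    C.card ≤ 2 + (G.nonRealIn C u).card + (G.nonRealIn C v).card +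
      (G.realNbrs u ∩ G.realNbrs v).card := by
  have hcov : C ⊆ insert u (insert v
      (G.nonRealIn C u ∪ G.nonRealIn C v ∪ (G.realNbrs u ∩ G.realNbrs v))) := by
    intro w hw
    simp only [mem_insert, mem_union, mem_inter, nonRealIn, realNbrs, mem_filter, mem_univ,
      true_and]
    tauto
  calc C.card ≤ _ := card_le_card hcov
    _ ≤ _ := (card_insert_le _ _).trans (Nat.add_le_add_right (card_insert_le _ _) 1)
    _ ≤ _ := by
      have := card_union_le (G.nonRealIn C u ∪ G.nonRealIn C v) (G.realNbrs u ∩ G.realNbrs v)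
      have := card_union_le (G.nonRealIn C u) (G.nonRealIn C v)
      omega

lemma coversNonReal_heavy
    (h1 : ∀ u v : V, u ≠ v → ¬G.real u v → ((G.realNbrs u) ∩ (G.realNbrs v)).card ≤ k)
    {t : ℕ} (ht : k + 2 * t < C.card) : G.CoversNonReal C (G.heavy C t) := by
  intro u hu v hv huv hr
  by_contra! hlight
  have hu' := mt (fun h => mem_filter.2 ⟨hu, h⟩) hlight.1
  have hv' := mt (fun h => mem_filter.2 ⟨hv, h⟩) hlight.2
  have := G.card_le_card_nonRealIn_add_card_inter C u v
  have := h1 u v huv hr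
  omega

lemma card_real_sdiff_le
    (h1 : ∀ u v : V, u ≠ v → ¬G.real u v → ((G.realNbrs u) ∩ (G.realNbrs v)).card ≤ k)
    (hcov : G.CoversNonReal C H) {h : V} (hh : h ∈ G.exposed C H) :
    ((C \ H).filter fun w => G.real h w).card ≤ k := by
  obtain ⟨hhH, u, hu, hhu⟩ := mem_filter.1 hh
  have huh : u ≠ h := fun e => (mem_sdiff.1 hu).2 (e ▸ hhH)
  refine (card_le_card fun w hw => ?_).trans (h1 u h huh (by rwa [G.real_symm]))
  obtain ⟨hw, hhw⟩ := mem_filter.1 hw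
  have hwu : u ≠ w := by rintro rfl; exact hhu hhw
  have huw : G.real u w := by
    by_contra hr
    rcases hcov u (mem_sdiff.1 hu).1 w (mem_sdiff.1 hw).1 hwu hr with h | h
    · exact (mem_sdiff.1 hu).2 h
    · exact (mem_sdiff.1 hw).2 h
  simp only [realNbrs, mem_inter, mem_filter, mem_univ, true_and]
  exact ⟨huw, hhw⟩

lemma card_exposed_mul_le
    (h1 : ∀ u v : V, u ≠ v → ¬G.real u v → ((G.realNbrs u) ∩ (G.realNbrs v)).card ≤ k)
    (hcov : G.CoversNonReal C H) (hHC : H ⊆ C) :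
    (G.exposed C H).card * C.card ≤
      ∑ v ∈ C, (G.nonRealIn C v).card + (G.exposed C H).card * (H.card + k) := by
  set E := G.exposed C H
  have hEC : E ⊆ C := (filter_subset _ _).trans hHC
  calc E.card * C.card ≤ ∑ h ∈ E, ((G.nonRealIn C h).card + (H.card + k)) := by
        have hle : ∀ h ∈ E, C.card ≤ (G.nonRealIn C h).card + (H.card + k) := fun h hh => by
          have := G.card_le_card_add_card_nonRealIn (C := C) (mem_filter.1 hh).1
          have := G.card_real_sdiff_le h1 hcov hh
          omega
        simpa only [smul_eq_mul] using card_nsmul_le_sum E _ C.card hle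
    _ = ∑ h ∈ E, (G.nonRealIn C h).card + E.card * (H.card + k) := by
        rw [sum_add_distrib, sum_const, smul_eq_mul]
    _ ≤ _ := Nat.add_le_add_right (sum_le_sum_of_subset hEC) _

lemma isCriticalClique_filter_closedRealNbrs_eq (S : Finset V)
    (hne : (univ.filter fun x => G.closedRealNbrs x = S).Nonempty) :
    IsCriticalClique G (univ.filter fun x => G.closedRealNbrs x = S) := by
  set K := univ.filter fun x => G.closedRealNbrs x = S
  have hK : ∀ x ∈ K, G.closedRealNbrs x = S := fun x hx => (mem_filter.1 hx).2
  obtain ⟨x₀, hx₀⟩ := hne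
  refine ⟨fun u hu v hv huv => ?_, ?_, fun K' hKK' _ hK' => ?_⟩
  · have hu : u ∈ G.closedRealNbrs v := by rw [hK v hv, ← hK u hu]; exact mem_insert_self u _
    rcases mem_insert.1 hu with rfl | hu
    · exact absurd rfl huv
    · rw [G.real_symm]; exact (mem_filter.1 hu).2
  · rw [inf_congr rfl hK, sup_congr rfl hK, inf_const ⟨x₀, hx₀⟩, sup_const ⟨x₀, hx₀⟩]
  · have hle : ∀ a ∈ K', ∀ b ∈ K', G.closedRealNbrs a ≤ G.closedRealNbrs b := fun a ha b hb =>
      (le_sup ha).trans (hK'.symm.le.trans (inf_le hb))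
    refine Subset.antisymm (fun x hx => mem_filter.2 ⟨mem_univ x, ?_⟩) hKK'
    rw [← hK x₀ hx₀]
    exact le_antisymm (hle x hx x₀ (hKK' hx₀)) (hle x₀ (hKK' hx₀) x hx)

lemma card_filter_closedRealNbrs_eq_le {m : ℕ} (h2 : ∀ K, IsCriticalClique G K → K.card ≤ m)
    (S : Finset V) : (univ.filter fun x => G.closedRealNbrs x = S).card ≤ m := by
  rcases (univ.filter fun x => G.closedRealNbrs x = S).eq_empty_or_nonempty with he | hne
  · simp [he]
  · exact h2 _ (G.isCriticalClique_filter_closedRealNbrs_eq S hne)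

lemma subset_union_of_coversNonReal (hcov : G.CoversNonReal C H) :
    C ⊆ H ∪ G.boundary C ∪ (G.exposed C H).biUnion (fun h => (C \ H).filter fun w => G.real h w) ∪
      univ.filter fun x => G.closedRealNbrs x = C \ G.exposed C H := by
  intro w hwC
  simp only [mem_union, mem_biUnion]
  by_contra! hw
  obtain ⟨⟨⟨hwH, hwB⟩, hwE⟩, hwK⟩ := hw
  refine hwK (mem_filter.2 ⟨mem_univ w, ?_⟩)
  ext x
  simp only [closedRealNbrs, realNbrs, mem_insert, mem_filter, mem_univ, true_and, mem_sdiff]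
  constructor
  · rintro (rfl | hx)
    · exact ⟨hwC, fun h => hwH (mem_filter.1 h).1⟩
    · refine ⟨by_contra fun hxC => hwB (mem_filter.2 ⟨hwC, x, hxC, hx⟩), fun hxE => ?_⟩
      refine hwE x hxE (mem_filter.2 ⟨mem_sdiff.2 ⟨hwC, hwH⟩, ?_⟩)
      rwa [G.real_symm]
  · rintro ⟨hxC, hxE⟩
    refine or_iff_not_imp_left.2 fun hxw => by_contra fun hr => ?_
    rcases hcov w hwC x hxC (Ne.symm hxw) hr with h | h
    · exact hwH h
    · exact hxE (mem_filter.2 ⟨h, w, mem_sdiff.2 ⟨hwC, hwH⟩, by rwa [G.real_symm]⟩)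

lemma card_le_of_coversNonReal
    (h1 : ∀ u v : V, u ≠ v → ¬G.real u v → ((G.realNbrs u) ∩ (G.realNbrs v)).card ≤ k)
    {m : ℕ} (h2 : ∀ K, IsCriticalClique G K → K.card ≤ m) (hcov : G.CoversNonReal C H) :
    C.card ≤ H.card + (G.boundary C).card + (G.exposed C H).card * k + m := by
  set E := G.exposed C H
  set B := E.biUnion fun h => (C \ H).filter fun w => G.real h w
  set K := univ.filter fun x => G.closedRealNbrs x = C \ E
  have hB : B.card ≤ E.card * k :=
    card_biUnion_le_card_mul _ _ k fun h hh => G.card_real_sdiff_le h1 hcov hh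
  have hK : K.card ≤ m := G.card_filter_closedRealNbrs_eq_le h2 _
  have hsub : C ⊆ H ∪ G.boundary C ∪ B ∪ K := G.subset_union_of_coversNonReal hcov
  have := card_le_card hsub
  have := card_union_le (H ∪ G.boundary C ∪ B) K
  have := card_union_le (H ∪ G.boundary C) B
  have := card_union_le H (G.boundary C)
  omega

variable {d : ℕ}

theorem card_le_of_sum_card_nonRealIn_le (hk : 1 ≤ k) (hd : 1 ≤ d)
    (h1 : ∀ u v : V, u ≠ v → ¬G.real u v → ((G.realNbrs u) ∩ (G.realNbrs v)).card ≤ k)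
    (h2 : ∀ K : Finset V, IsCriticalClique G K → K.card ≤ k + 2)
    (hsum : ∑ v ∈ C, (G.nonRealIn C v).card ≤ 2 * k + 1 + 2 * (d * C.card))
    (hbd : (G.boundary C).card ≤ k) :
    C.card ≤ 15 * k ^ 2 * d := by
  by_contra! hbig
  set n := C.card
  set m := k ^ 2 * d
  have hdkm : d * k ≤ m := calc
    d * k ≤ d * k ^ 2 := Nat.mul_le_mul_left d (Nat.le_self_pow two_ne_zero k)
    _ = m := Nat.mul_comm _ _
  have hkm : k ≤ m := (Nat.le_mul_of_pos_left k hd).trans hdkm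
  have hdm : d ≤ m := (Nat.le_mul_of_pos_right d hk).trans hdkm
  have hmn : 15 * m < n := by rwa [← mul_assoc]
  set t := (n - k - 1) / 2
  set H := G.heavy C t
  have hcov : G.CoversNonReal C H := G.coversNonReal_heavy h1 (by omega)
  have hH : H.card ≤ 6 * d := by
    by_contra! hH
    have := G.card_heavy_mul_le C t
    have := Nat.mul_le_mul_right t hH
    have := Nat.mul_le_mul_left d (show n ≤ k + 2 + 2 * t by omega)
    have := Nat.mul_le_mul_left d (show 15 * m ≤ 2 * t + k + 1 by omega)
    have := Nat.mul_le_mul_left d hkm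
    nlinarith
  set E := G.exposed C H
  have hE : E.card ≤ 4 * d := by
    by_contra! hE
    have := G.card_exposed_mul_le h1 hcov (filter_subset _ _)
    have := Nat.mul_le_mul_left E.card (show H.card + k ≤ 6 * d + k by omega)
    have := Nat.mul_le_mul_right n hE
    have := Nat.mul_le_mul_left E.card (show 15 * d ≤ n by omega)
    have := Nat.mul_le_mul_left E.card (show 15 * k ≤ n by omega)
    nlinarith
  have := G.card_le_of_coversNonReal h1 h2 hcov
  have := Nat.mul_le_mul_right k hE
  linarith

end NonReal

end FuzzyGraph

/-- Under the stated reducedness conditions and existence of a fuzzy degeneracy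
ordering with back-degree at most `d`, every cluster of every clustering of cost at most `k`
has at most `15k²d` vertices. -/
theorem stmt6 {V : Type*} [Fintype V] [DecidableEq V]
    (G : FuzzyGraph V) (ω : V → V → ℕ) (hω : IsWeight G ω) (k d : ℕ) (hk : 1 ≤ k) (hd : 1 ≤ d)
    (h1 : ∀ u v : V, u ≠ v → ¬G.real u v → ((G.realNbrs u) ∩ (G.realNbrs v)).card ≤ k)
    (h2 : ∀ K : Finset V, IsCriticalClique G K → K.card ≤ k + 2)
    (h3 : ∃ σ : Fin (Fintype.card V) ≃ V, ∀ i : Fin (Fintype.card V),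
      (Finset.univ.filter fun j : Fin (Fintype.card V) => i < j ∧ G.fuzzy (σ i) (σ j)).card ≤ d)
    (𝒞 : Finpartition (Finset.univ : Finset V)) (hcost : cost G ω 𝒞 ≤ k)
    (C : Finset V) (hC : C ∈ 𝒞.parts) :
    C.card ≤ 15 * k ^ 2 * d := by
  obtain ⟨σ, hσ⟩ := h3
  have hsum := (G.sum_card_nonRealIn_le C).trans
    (Nat.add_le_add (FuzzyGraph.card_nonedge_pairs_le hω hC) (G.card_fuzzy_pairs_le σ hσ C))
  refine G.card_le_of_sum_card_nonRealIn_le hk hd h1 h2 (by omega) ?_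
  exact (FuzzyGraph.card_boundary_le_cost hω hC).trans hcost
end

section
/- Let G = (V, E⁺, E⁰) be a fuzzy graph with weight function ω that is fuzzy c-closed, and let k be a nonnegative integer. Let K be a nonempty clique in G⁽⁺⁾ and let X := {v ∈ V : N⁺(v) = K}. Assume that X is a clique in G⁽⁰⁾ (every two distinct vertices of X are joined by a fuzzy edge) and |X| > 2k + c + 1, and let v ∈ X. Then G admits a clustering of cost at most k if and only if the fuzzy graph G − v obtained by deleting the vertex v (restricting E⁺, E⁰ and ω to pairs of remaining vertices) admits a clustering of cost at most k. -/
open Finset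

/-- The fuzzy graph obtained by deleting the vertex `v`. -/
def FuzzyGraph.deleteVertex {V : Type*} (G : FuzzyGraph V) (v : V) :
    FuzzyGraph {x : V // x ≠ v} where
  real a b := G.real a b
  fuzzy a b := G.fuzzy a b
  real_symm a b := G.real_symm a b
  fuzzy_symm a b := G.fuzzy_symm a b
  real_irrefl a := G.real_irrefl a
  fuzzy_irrefl a := G.fuzzy_irrefl a
  not_real_and_fuzzy a b := G.not_real_and_fuzzy a b

/-!
Take a clustering of `G - v` of cost at most `k`. Every vertex of `X \ {v}` is joined to every
vertex of `K` by a real edge of positive weight, so at most `k` of these more than `2k + c`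
vertices are separated from any given vertex of `K`. Hence all of `K` lies in one cluster,
together with more than `k + c` vertices of `X`. No nonneighbour `u` of `v` lies in that cluster:
fewer than `c` of those vertices of `X` are fuzzy neighbours of `u`, being common fuzzy
neighbours of `u` and `v`, and each of the others would form a nonedge with `u` inside the
cluster. So adding `v` to this cluster costs nothing, while deleting `v` from a clustering of
`G` never increases its cost.
-/

section Clustering

variable {α β : Type*} [Fintype α] [DecidableEq α] [Fintype β] [DecidableEq β]

lemma together_iff_part_eq {P : Finpartition (univ : Finset α)} {a b : α} :
    together P a b ↔ P.part a = P.part b := by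
  rw [← P.mem_part_iff_part_eq_part (mem_univ a) (mem_univ b), Finpartition.mem_part_iff_exists]
  rfl

lemma together_symm {P : Finpartition (univ : Finset α)} {a b : α} (h : together P a b) :
    together P b a :=
  together_iff_part_eq.2 (together_iff_part_eq.1 h).symm

lemma together_trans {P : Finpartition (univ : Finset α)} {a b c : α}
    (hab : together P a b) (hbc : together P b c) : together P a c :=
  together_iff_part_eq.2 ((together_iff_part_eq.1 hab).trans (together_iff_part_eq.1 hbc))

instance {γ : Type*} [DecidableEq γ] (f : α → γ) : DecidableRel (Setoid.ker f) :=
  fun a b => inferInstanceAs (Decidable (f a = f b))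

def comapClustering (f : α → β) (P : Finpartition (univ : Finset β)) :
    Finpartition (univ : Finset α) :=
  Finpartition.ofSetoid (Setoid.ker fun a => P.part (f a))

lemma together_comapClustering {f : α → β} {P : Finpartition (univ : Finset β)} {a b : α} :
    together (comapClustering f P) a b ↔ together P (f a) (f b) := by
  rw [together_iff_part_eq, together_iff_part_eq, ← (comapClustering f P).mem_part_iff_part_eq_part
    (mem_univ a) (mem_univ b)]
  exact Finpartition.mem_part_ofSetoid_iff_rel.trans eq_comm

end Clustering

lemma two_mul_card_le_sum_offDiag {α : Type*} [Fintype α] [DecidableEq α] {f : α × α → ℕ}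
    {u : α} {B : Finset α} (hu : u ∉ B) (h₁ : ∀ b ∈ B, 1 ≤ f (b, u))
    (h₂ : ∀ b ∈ B, 1 ≤ f (u, b)) :
    2 * #B ≤ ∑ p ∈ univ.offDiag, f p := by
  have hdisj : Disjoint (B ×ˢ {u}) ({u} ×ˢ B) := by
    rw [disjoint_left]
    rintro ⟨a, b⟩ h₁ h₂
    simp only [mem_product, mem_singleton] at h₁ h₂
    exact hu (h₂.1 ▸ h₁.1)
  have hsub : B ×ˢ {u} ∪ {u} ×ˢ B ⊆ univ.offDiag := by
    rintro ⟨a, b⟩ h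
    simp only [mem_union, mem_product, mem_singleton] at h
    simp only [mem_offDiag, mem_univ, true_and]
    rintro rfl
    rcases h with ⟨ha, rfl⟩ | ⟨rfl, hb⟩ <;> contradiction
  calc 2 * #B = ∑ _b ∈ B, 1 + ∑ _b ∈ B, 1 := by rw [sum_const, smul_eq_mul, mul_one, two_mul]
    _ ≤ ∑ b ∈ B, f (b, u) + ∑ b ∈ B, f (u, b) := add_le_add (sum_le_sum h₁) (sum_le_sum h₂)
    _ = ∑ p ∈ B ×ˢ {u} ∪ {u} ×ˢ B, f p := by
      rw [sum_union hdisj, sum_product, sum_product_right]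
      simp only [sum_singleton]
    _ ≤ ∑ p ∈ univ.offDiag, f p := sum_le_sum_of_subset hsub

lemma FuzzyGraph.nonedge_comm {V : Type*} {G : FuzzyGraph V} {a b : V} :
    G.nonedge a b ↔ G.nonedge b a := by
  rw [FuzzyGraph.nonedge, FuzzyGraph.nonedge, G.real_symm, G.fuzzy_symm, ne_comm]

section Cost

variable {V : Type*} [Fintype V] [DecidableEq V] {G : FuzzyGraph V} {ω : V → V → ℕ}
  {P : Finpartition (univ : Finset V)} {a b : V}

variable (G P) in
def Disagrees (a b : V) : Prop :=
  (G.real a b ∧ ¬together P a b) ∨ (G.nonedge a b ∧ together P a b)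

lemma Disagrees.symm (h : Disagrees G P a b) : Disagrees G P b a := by
  rw [Disagrees, G.real_symm, FuzzyGraph.nonedge_comm] at h
  exact h.imp (And.imp_right (mt together_symm)) (And.imp_right together_symm)

variable (G ω P) in
def pairCost (a b : V) : ℕ :=
  (if G.real a b ∧ ¬together P a b then ω a b else 0) +
    (if G.nonedge a b ∧ together P a b then ω a b else 0)

lemma cost_eq_sum_pairCost : cost G ω P = (∑ p ∈ univ.offDiag, pairCost G ω P p.1 p.2) / 2 :=
  rfl

lemma pairCost_eq_zero_of_not_disagrees (h : ¬Disagrees G P a b) : pairCost G ω P a b = 0 := by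
  simp only [Disagrees, not_or] at h
  simp only [pairCost, if_neg h.1, if_neg h.2]

lemma one_le_pairCost (hω : IsWeight G ω) (h : Disagrees G P a b) : 1 ≤ pairCost G ω P a b := by
  have hω_pos : a ≠ b → ¬G.fuzzy a b → 1 ≤ ω a b := fun hab hf =>
    Nat.one_le_iff_ne_zero.2 fun h0 => hf ((hω.2 a b hab).1 h0)
  rcases h with h | h
  · have hab : a ≠ b := by rintro rfl; simp [G.real_irrefl] at h
    have hf : ¬G.fuzzy a b := fun hf => G.not_real_and_fuzzy a b ⟨h.1, hf⟩
    simpa only [pairCost, if_pos h] using (hω_pos hab hf).trans (Nat.le_add_right _ _)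
  · simpa only [pairCost, if_pos h] using
      (hω_pos h.1.1 h.1.2.2).trans (Nat.le_add_left _ _)

lemma card_le_cost (hω : IsWeight G ω) {u : V} {B : Finset V} (hu : u ∉ B)
    (hB : ∀ b ∈ B, Disagrees G P b u) : #B ≤ cost G ω P := by
  have := two_mul_card_le_sum_offDiag (f := fun p => pairCost G ω P p.1 p.2) hu
    (fun b hb => one_le_pairCost hω (hB b hb))
    (fun b hb => one_le_pairCost hω (hB b hb).symm)
  rw [cost_eq_sum_pairCost]
  omega

lemma card_filter_not_together_le (hω : IsWeight G ω) {k : ℕ} (hk : cost G ω P ≤ k) {u : V}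
    {Y : Finset V} (hY : ∀ y ∈ Y, G.real y u) : #{y ∈ Y | ¬together P y u} ≤ k := by
  refine (card_le_cost hω (u := u) ?_ fun y hy => Or.inl ⟨hY y (mem_filter.1 hy).1,
    (mem_filter.1 hy).2⟩).trans hk
  intro hu
  simpa [G.real_irrefl] using hY u (mem_filter.1 hu).1

lemma together_of_forall_real (hω : IsWeight G ω) {k : ℕ} (hk : cost G ω P ≤ k) {u u' : V}
    {Y : Finset V} (hY : 2 * k < #Y) (hu : ∀ y ∈ Y, G.real y u) (hu' : ∀ y ∈ Y, G.real y u') :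
    together P u u' := by
  have h := card_filter_add_card_filter_not (s := Y) (together P · u)
  have h' := card_filter_add_card_filter_not (s := Y) (together P · u')
  have hsep := card_filter_not_together_le hω hk hu
  have hsep' := card_filter_not_together_le hω hk hu'
  obtain ⟨y, hy⟩ := inter_nonempty_of_card_lt_card_add_card (filter_subset (together P · u) Y)
    (filter_subset (together P · u') Y) (by omega)
  simp only [mem_inter, mem_filter] at hy
  exact together_trans (together_symm hy.1.2) hy.2.2

end Cost

lemma FuzzyGraph.nonedge_deleteVertex_iff {V : Type*} {G : FuzzyGraph V} {v : V}
    {a b : {x // x ≠ v}} : (G.deleteVertex v).nonedge a b ↔ G.nonedge a b := by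
  simp only [FuzzyGraph.nonedge, ne_eq, Subtype.ext_iff]
  rfl

section DeleteVertex

variable {V : Type*} [Fintype V] [DecidableEq V] {G : FuzzyGraph V} {ω : V → V → ℕ} {v : V}

lemma IsWeight.deleteVertex (hω : IsWeight G ω) :
    IsWeight (G.deleteVertex v) fun a b => ω a.1 b.1 :=
  ⟨fun a b => hω.1 a b, fun a b hab => hω.2 a b (Subtype.coe_injective.ne hab)⟩

lemma sum_pairCost_deleteVertex {P' : Finpartition (univ : Finset {x // x ≠ v})}
    {P : Finpartition (univ : Finset V)} (hP : ∀ a b, together P' a b ↔ together P a.1 b.1) :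
    ∑ p ∈ (univ : Finset {x // x ≠ v}).offDiag,
        pairCost (G.deleteVertex v) (fun a b => ω a.1 b.1) P' p.1 p.2 =
      ∑ p ∈ univ.offDiag with p.1 ≠ v ∧ p.2 ≠ v, pairCost G ω P p.1 p.2 := by
  have hpair : ∀ a b : {x // x ≠ v},
      pairCost (G.deleteVertex v) (fun a b => ω a.1 b.1) P' a b = pairCost G ω P a b := by
    intro a b
    simp only [pairCost, hP, FuzzyGraph.nonedge_deleteVertex_iff]
    rfl
  simp only [hpair]
  refine sum_nbij (fun p => (p.1.1, p.2.1)) ?_ ?_ ?_ fun _ _ => rfl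
  · rintro ⟨a, b⟩ h
    simp only [mem_filter, mem_offDiag, mem_univ, true_and] at h ⊢
    exact ⟨fun h' => h (Subtype.ext h'), a.2, b.2⟩
  · rintro ⟨a, b⟩ - ⟨a', b'⟩ - h
    simp_all [Prod.ext_iff, Subtype.ext_iff]
  · rintro ⟨a, b⟩ h
    simp only [mem_coe, mem_filter, mem_offDiag, mem_univ, true_and] at h
    exact ⟨(⟨a, h.2.1⟩, ⟨b, h.2.2⟩), by simp [Subtype.ext_iff, h.1], rfl⟩

lemma cost_deleteVertex_comapClustering_le (P : Finpartition (univ : Finset V)) :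
    cost (G.deleteVertex v) (fun a b => ω a.1 b.1) (comapClustering Subtype.val P) ≤
      cost G ω P := by
  rw [cost_eq_sum_pairCost, cost_eq_sum_pairCost,
    sum_pairCost_deleteVertex fun a b => together_comapClustering]
  exact Nat.div_le_div_right (sum_le_sum_of_subset (filter_subset _ _))

variable (v) in
def collapseTo (x₀ : {x // x ≠ v}) (w : V) : {x // x ≠ v} :=
  if h : w = v then x₀ else ⟨w, h⟩

lemma cost_comapClustering_collapseTo {𝒞' : Finpartition (univ : Finset {x // x ≠ v})}
    {x₀ : {x // x ≠ v}} (hx₀ : ∀ u : {x // x ≠ v},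
      (G.real v u → together 𝒞' x₀ u) ∧ (G.nonedge v u → ¬together 𝒞' x₀ u)) :
    cost G ω (comapClustering (collapseTo v x₀) 𝒞') =
      cost (G.deleteVertex v) (fun a b => ω a.1 b.1) 𝒞' := by
  set P := comapClustering (collapseTo v x₀) 𝒞'
  have hP : ∀ a b : {x // x ≠ v}, together 𝒞' a b ↔ together P a.1 b.1 := fun a b => by
    simp [P, together_comapClustering, collapseTo, a.2, b.2]
  have hv : ∀ u, u ≠ v → ¬Disagrees G P v u := by
    intro u hu
    have hvu : together P v u ↔ together 𝒞' x₀ ⟨u, hu⟩ := by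
      simp [P, together_comapClustering, collapseTo, hu]
    rw [Disagrees, hvu]
    rintro (⟨hr, hn⟩ | ⟨hn, ht⟩)
    exacts [hn ((hx₀ ⟨u, hu⟩).1 hr), (hx₀ ⟨u, hu⟩).2 hn ht]
  rw [cost_eq_sum_pairCost, cost_eq_sum_pairCost, sum_pairCost_deleteVertex hP,
    ← sum_filter_add_sum_filter_not univ.offDiag (fun p => p.1 ≠ v ∧ p.2 ≠ v),
    sum_eq_zero (s := {p ∈ univ.offDiag | ¬(p.1 ≠ v ∧ p.2 ≠ v)}), add_zero]
  rintro ⟨a, b⟩ h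
  simp only [mem_filter, mem_offDiag, mem_univ, true_and, not_and_or, not_not] at h
  obtain ⟨hab, rfl | rfl⟩ := h
  · exact pairCost_eq_zero_of_not_disagrees (hv b (Ne.symm hab))
  · exact pairCost_eq_zero_of_not_disagrees (mt Disagrees.symm (hv a hab))

lemma card_lt_of_together_nonedge (hω : IsWeight G ω) {c k : ℕ} (hcl : FuzzyCClosed G c)
    {𝒞' : Finpartition (univ : Finset {x // x ≠ v})}
    (hk : cost (G.deleteVertex v) (fun a b => ω a.1 b.1) 𝒞' ≤ k)
    {u : {x // x ≠ v}} (hvu : G.nonedge v u) {A : Finset {x // x ≠ v}}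
    (hA : ∀ a ∈ A, G.fuzzy v a ∧ ¬G.real a u ∧ together 𝒞' a u) : #A < k + c := by
  have hfuzzy : #{a ∈ A | G.fuzzy u a.1} < c := by
    refine (card_le_card_of_injOn Subtype.val ?_ Subtype.val_injective.injOn).trans_lt
      (hcl v u hvu.1 hvu.2.2)
    intro a ha
    simp only [mem_coe, mem_filter] at ha
    simp [FuzzyGraph.fuzzyNbrs, (hA a ha.1).1, ha.2]
  have hnonedge : #{a ∈ A | ¬G.fuzzy u a.1} ≤ k := by
    refine (card_le_cost hω.deleteVertex (u := u) ?_ fun a ha => Or.inr ⟨?_, ?_⟩).trans hk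
    · exact fun hu => hvu.2.2 (hA u (mem_filter.1 hu).1).1
    · obtain ⟨haA, hua⟩ := mem_filter.1 ha
      obtain ⟨hva, hau, -⟩ := hA a haA
      refine FuzzyGraph.nonedge_deleteVertex_iff.2 ⟨fun h => hvu.2.2 (h ▸ hva), hau, ?_⟩
      rwa [G.fuzzy_symm]
    · exact (hA a (mem_filter.1 ha).1).2.2
  have := card_filter_add_card_filter_not (s := A) (fun a => G.fuzzy u a.1)
  omega

lemma exists_cluster_compatible_of_many_fuzzy_twins (hω : IsWeight G ω) {c k : ℕ}
    (hcl : FuzzyCClosed G c) {𝒞' : Finpartition (univ : Finset {x // x ≠ v})}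
    (hk : cost (G.deleteVertex v) (fun a b => ω a.1 b.1) 𝒞' ≤ k)
    (hv : (G.realNbrs v).Nonempty) {Y : Finset {x // x ≠ v}}
    (hYreal : ∀ y ∈ Y, G.realNbrs y = G.realNbrs v) (hYfuzzy : ∀ y ∈ Y, G.fuzzy v y)
    (hY : 2 * k + c < #Y) :
    ∃ x₀ : {x // x ≠ v}, ∀ u : {x // x ≠ v},
      (G.real v u → together 𝒞' x₀ u) ∧ (G.nonedge v u → ¬together 𝒞' x₀ u) := by
  have hYu : ∀ y ∈ Y, ∀ u : V, G.real y u ↔ G.real v u := fun y hy u => by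
    simpa [FuzzyGraph.realNbrs] using congrArg (u ∈ ·) (hYreal y hy)
  obtain ⟨u₀, hu₀⟩ := hv
  have hvu₀ : G.real v u₀ := by simpa [FuzzyGraph.realNbrs] using hu₀
  have hu₀v : u₀ ≠ v := by rintro rfl; simp [G.real_irrefl] at hvu₀
  set A₀ := {y ∈ Y | together 𝒞' y ⟨u₀, hu₀v⟩}
  have hA₀ : k + c < #A₀ := by
    have := card_filter_not_together_le hω.deleteVertex hk (u := ⟨u₀, hu₀v⟩)
      fun y hy => (hYu y hy u₀).2 hvu₀
    have : #A₀ + #{y ∈ Y | ¬together 𝒞' y ⟨u₀, hu₀v⟩} = #Y :=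
      card_filter_add_card_filter_not _
    omega
  obtain ⟨x₀, hx₀⟩ := card_pos.1 (by omega : 0 < #A₀)
  have hx₀u₀ := (mem_filter.1 hx₀).2
  refine ⟨x₀, fun u => ⟨fun hvu => ?_, fun hvu hx₀u => ?_⟩⟩
  · exact together_trans hx₀u₀ (together_of_forall_real hω.deleteVertex hk (by omega)
      (fun y hy => (hYu y hy u₀).2 hvu₀) (fun y hy => (hYu y hy u).2 hvu))
  · refine (card_lt_of_together_nonedge hω hcl hk hvu (A := A₀) fun a ha => ?_).not_ge hA₀.le
    obtain ⟨haY, hau₀⟩ := mem_filter.1 ha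
    exact ⟨hYfuzzy a haY, fun h => hvu.2.1 ((hYu a haY u).1 h),
      together_trans hau₀ (together_trans (together_symm hx₀u₀) hx₀u)⟩

end DeleteVertex

theorem stmt14_general {V : Type*} [Fintype V] [DecidableEq V]
    (G : FuzzyGraph V) (ω : V → V → ℕ) (hω : IsWeight G ω) (c k : ℕ)
    (hcl : FuzzyCClosed G c)
    (K : Finset V) (hKne : K.Nonempty)
    (hXfuzzy : IsFuzzyClique G (Finset.univ.filter fun x => G.realNbrs x = K))
    (hXcard : 2 * k + c + 1 < (Finset.univ.filter fun x => G.realNbrs x = K).card)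
    (v : V) (hv : G.realNbrs v = K) :
    (∃ 𝒞 : Finpartition (Finset.univ : Finset V), cost G ω 𝒞 ≤ k) ↔
    (∃ 𝒞' : Finpartition (Finset.univ : Finset {x : V // x ≠ v}),
      cost (G.deleteVertex v) (fun a b => ω a.1 b.1) 𝒞' ≤ k) := by
  set X := univ.filter fun x => G.realNbrs x = K
  have hvX : v ∈ X := mem_filter.2 ⟨mem_univ v, hv⟩
  refine ⟨fun ⟨𝒞, h𝒞⟩ => ⟨_, (cost_deleteVertex_comapClustering_le 𝒞).trans h𝒞⟩, ?_⟩
  rintro ⟨𝒞', h𝒞'⟩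
  have hY : 2 * k + c < #(X.subtype (· ≠ v)) := by
    rw [card_subtype, filter_ne', card_erase_of_mem hvX]
    omega
  obtain ⟨x₀, hx₀⟩ := exists_cluster_compatible_of_many_fuzzy_twins hω hcl h𝒞' (hv ▸ hKne)
    (fun y hy => (mem_filter.1 (mem_subtype.1 hy)).2.trans hv.symm)
    (fun y hy => hXfuzzy v hvX y (mem_subtype.1 hy) (Ne.symm y.2)) hY
  exact ⟨_, (cost_comapClustering_collapseTo hx₀).le.trans h𝒞'⟩

/-- If `K` is a nonempty real clique, `X = {v : N⁺(v) = K}` is a fuzzy clique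
with `|X| > 2k + c + 1` and `v ∈ X`, then `G` has a clustering of cost at most `k` iff
`G − v` has one. -/
theorem stmt14 {V : Type*} [Fintype V] [DecidableEq V]
    (G : FuzzyGraph V) (ω : V → V → ℕ) (hω : IsWeight G ω) (c k : ℕ)
    (hcl : FuzzyCClosed G c)
    (K : Finset V) (hKne : K.Nonempty) (hK : IsRealClique G K)
    (hXfuzzy : IsFuzzyClique G (Finset.univ.filter fun x => G.realNbrs x = K))
    (hXcard : 2 * k + c + 1 < (Finset.univ.filter fun x => G.realNbrs x = K).card)
    (v : V) (hv : G.realNbrs v = K) :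
    (∃ 𝒞 : Finpartition (Finset.univ : Finset V), cost G ω 𝒞 ≤ k) ↔
    (∃ 𝒞' : Finpartition (Finset.univ : Finset {x : V // x ≠ v}),
      cost (G.deleteVertex v) (fun a b => ω a.1 b.1) 𝒞' ≤ k) :=
  stmt14_general G ω hω c k hcl K hKne hXfuzzy hXcard v hv
end
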